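/- For the CHSH game with each party's input independently Bernoulli distributed with parameter p ∈ [0,1], the quantum value is: q*(w_{CHSH,p}) = 1 − p² if 0 ≤ p ≤ 1 − 1/√2; q*(w_{CHSH,p}) = (1/√2)·(1 − 2p(1−p)) + 1/2 if 1 − 1/√2 ≤ p ≤ 1/√2; and q*(w_{CHSH,p}) = 2p − p² if 1/√2 ≤ p ≤ 1. In particular, for p = 1/2 the quantum value equals cos²(π/8). -/

import Mathlib

open scoped BigOperators

namespace TC

/-- A behavior: a conditional probability distribution over joint decisions given
joint observations. -/
def IsBehavior {n : ℕ} {O D : Fin n → Type} [∀ i, Fintype (D i)]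
    (p : (∀ i, O i) → (∀ i, D i) → ℝ) : Prop :=
  (∀ o d, 0 ≤ p o d) ∧ ∀ o, ∑ d, p o d = 1

/-- The behavior of a deterministic strategy `f`. -/
def detBehavior {n : ℕ} {O D : Fin n → Type} [∀ i, DecidableEq (D i)]
    (f : ∀ i, O i → D i) : (∀ i, O i) → (∀ i, D i) → ℝ :=
  fun o d => ∏ i, if d i = f i (o i) then (1 : ℝ) else 0

/-- Expected utility of a behavior `p` with respect to a weighted utility array `w`. -/
def expUtility {n : ℕ} {O D : Fin n → Type} [∀ i, Fintype (O i)] [∀ i, Fintype (D i)]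
    (w p : (∀ i, O i) → (∀ i, D i) → ℝ) : ℝ :=
  ∑ o, ∑ d, p o d * w o d

/-- A quantum strategy: a finite dimension for each party, a projective measurement
(indexed by decisions) for each party and observation, and a shared unit state vector. -/
structure QStrategy {n : ℕ} (O D : Fin n → Type) [∀ i, Fintype (O i)] [∀ i, Fintype (D i)] where
  dim : Fin n → ℕ
  dim_pos : ∀ i, 0 < dim i
  proj : ∀ i, O i → D i → Matrix (Fin (dim i)) (Fin (dim i)) ℂ
  proj_herm : ∀ i o d, (proj i o d).IsHermitian
  proj_idem : ∀ i o d, proj i o d * proj i o d = proj i o d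
  proj_orth : ∀ i o d d', d ≠ d' → proj i o d * proj i o d' = 0
  proj_sum : ∀ i o, ∑ d, proj i o d = 1
  state : (∀ i, Fin (dim i)) → ℂ
  state_norm : ∑ x, Complex.normSq (state x) = 1

/-- The behavior determined by a family of "projectors" (measurement operators, one for each
party, observation and decision) and a shared state:
`p(d|o) = ⟨ψ, (⊗ᵢ Πᵢ^{(dᵢ|oᵢ)}) ψ⟩`. -/
noncomputable def projBehavior {n : ℕ} {O D : Fin n → Type} (dim : Fin n → ℕ)
    (proj : ∀ i, O i → D i → Matrix (Fin (dim i)) (Fin (dim i)) ℂ)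
    (ψ : (∀ i, Fin (dim i)) → ℂ) : (∀ i, O i) → (∀ i, D i) → ℝ :=
  fun o d =>
    (∑ x, ∑ y, (starRingEnd ℂ) (ψ x) * (∏ i, proj i (o i) (d i) (x i) (y i)) * ψ y).re

/-- The quantum behavior of a quantum strategy. -/
noncomputable def QStrategy.behavior {n : ℕ} {O D : Fin n → Type}
    [∀ i, Fintype (O i)] [∀ i, Fintype (D i)] (S : QStrategy O D) :
    (∀ i, O i) → (∀ i, D i) → ℝ :=
  projBehavior S.dim S.proj S.state

/-- The classical value: the maximum expected utility over deterministic strategies. -/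
noncomputable def cValue {n : ℕ} {O D : Fin n → Type} [∀ i, Fintype (O i)] [∀ i, Fintype (D i)]
    [∀ i, DecidableEq (D i)] (w : (∀ i, O i) → (∀ i, D i) → ℝ) : ℝ :=
  ⨆ f : ∀ i, O i → D i, expUtility w (detBehavior f)

/-- The quantum value: the supremum of expected utilities over all quantum strategies
(of all finite dimensions). -/
noncomputable def qValue {n : ℕ} {O D : Fin n → Type} [∀ i, Fintype (O i)] [∀ i, Fintype (D i)]
    (w : (∀ i, O i) → (∀ i, D i) → ℝ) : ℝ :=
  sSup {x : ℝ | ∃ S : QStrategy O D, x = expUtility w S.behavior}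

/-- The gap `g(w) = q*(w) − c*(w)`. -/
noncomputable def gap {n : ℕ} {O D : Fin n → Type} [∀ i, Fintype (O i)] [∀ i, Fintype (D i)]
    [∀ i, DecidableEq (D i)] (w : (∀ i, O i) → (∀ i, D i) → ℝ) : ℝ :=
  qValue w - cValue w

/-- `w` is gapped if its gap is positive. -/
def Gapped {n : ℕ} {O D : Fin n → Type} [∀ i, Fintype (O i)] [∀ i, Fintype (D i)]
    [∀ i, DecidableEq (D i)] (w : (∀ i, O i) → (∀ i, D i) → ℝ) : Prop :=
  0 < gap w

/-- A quantum strategy is degenerate if some party uses a trivial (zero or identity)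
measurement operator. -/
def QStrategy.Degenerate {n : ℕ} {O D : Fin n → Type}
    [∀ i, Fintype (O i)] [∀ i, Fintype (D i)] (S : QStrategy O D) : Prop :=
  ∃ i o d, S.proj i o d = 0 ∨ S.proj i o d = 1

/-- A classical behavior: a convex combination of deterministic behaviors. -/
def IsClassicalBehavior {n : ℕ} {O D : Fin n → Type}
    [∀ i, Fintype (O i)] [∀ i, DecidableEq (O i)] [∀ i, Fintype (D i)] [∀ i, DecidableEq (D i)]
    (p : (∀ i, O i) → (∀ i, D i) → ℝ) : Prop :=
  ∃ μ : (∀ i, O i → D i) → ℝ, (∀ f, 0 ≤ μ f) ∧ ∑ f, μ f = 1 ∧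
    ∀ o d, p o d = ∑ f, μ f * detBehavior f o d

/-- The lossy behavior built from a family of measurement operators, a shared state, a fallback
deterministic strategy `f`, and efficiencies `η`: the sum over subsets `T` of parties that
experience loss, weighted by the loss probabilities, of the behavior of the `T`-semiclassical
strategy (parties in `T` use the trivial projectors implementing `f` locally). -/
noncomputable def lossyProjBehavior {n : ℕ} {O D : Fin n → Type} [∀ i, DecidableEq (D i)]
    (dim : Fin n → ℕ) (proj : ∀ i, O i → D i → Matrix (Fin (dim i)) (Fin (dim i)) ℂ)
    (ψ : (∀ i, Fin (dim i)) → ℂ) (f : ∀ i, O i → D i) (η : Fin n → ℝ) :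
    (∀ i, O i) → (∀ i, D i) → ℝ :=
  fun o d => ∑ T : Finset (Fin n),
    ((∏ i ∈ T, (1 - η i)) * ∏ i ∈ Tᶜ, η i) *
      projBehavior dim
        (fun i oi di =>
          if i ∈ T then (if di = f i oi then (1 : Matrix (Fin (dim i)) (Fin (dim i)) ℂ) else 0)
          else proj i oi di)
        ψ o d

/-- The `{ηᵢ}`-lossy behavior of a pair `(S_q, S_d)` of a quantum strategy and a fallback
deterministic strategy. -/
noncomputable def lossyBehavior {n : ℕ} {O D : Fin n → Type}
    [∀ i, Fintype (O i)] [∀ i, Fintype (D i)] [∀ i, DecidableEq (D i)]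
    (S : QStrategy O D) (f : ∀ i, O i → D i) (η : Fin n → ℝ) :
    (∀ i, O i) → (∀ i, D i) → ℝ :=
  lossyProjBehavior S.dim S.proj S.state f η

/-- The `ν`-noisy behavior of a quantum strategy:
`p_o^d(ν) = tr[(⊗ᵢ Πᵢ^{(dᵢ|oᵢ)}) ((1−ν)|ψ⟩⟨ψ| + ν π)]` with `π` the maximally mixed state. -/
noncomputable def noisyBehavior {n : ℕ} {O D : Fin n → Type}
    [∀ i, Fintype (O i)] [∀ i, Fintype (D i)] (S : QStrategy O D) (ν : ℝ) :
    (∀ i, O i) → (∀ i, D i) → ℝ :=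
  fun o d =>
    (∑ x, ∑ y, (∏ i, S.proj i (o i) (d i) (x i) (y i)) *
      ((1 - ν) * (S.state y * (starRingEnd ℂ) (S.state x)) +
        ((ν : ℂ) / (∏ i, (S.dim i : ℂ))) * (if x = y then 1 else 0))).re

end TC

namespace TC

/-- The CHSH weighted utility array with each party's input independently Bernoulli
distributed with parameter `p`: `w(o;d) = p^{o₁+o₂}(1−p)^{2−o₁−o₂}·χ[(o₁∧o₂) = d₁⊕d₂]`
(observation `true` is drawn with probability `p`). -/
noncomputable def wCHSHp (p : ℝ) : (Fin 2 → Bool) → (Fin 2 → Bool) → ℝ :=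
  fun o d => (if o 0 then p else 1 - p) * (if o 1 then p else 1 - p) *
    (if (o 0 && o 1) = (d 0 != d 1) then 1 else 0)

end TC

namespace CHSHAux
open TC

variable {m k : ℕ}

/-- The sesquilinear correlation form `⟨ψ, (A⊗B)ψ⟩` in flattened coordinates. -/
noncomputable def corr (ψ : Fin m → Fin k → ℂ)
    (A : Matrix (Fin m) (Fin m) ℂ) (B : Matrix (Fin k) (Fin k) ℂ) : ℂ :=
  ∑ a, ∑ b, ∑ c, ∑ d, (starRingEnd ℂ) (ψ a b) * A a c * B b d * ψ c d

lemma corr_add_left (ψ : Fin m → Fin k → ℂ) (A A' : Matrix (Fin m) (Fin m) ℂ)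
    (B : Matrix (Fin k) (Fin k) ℂ) :
    corr ψ (A + A') B = corr ψ A B + corr ψ A' B := by
  simp [corr, Matrix.add_apply, add_mul, mul_add, Finset.sum_add_distrib]

lemma corr_sub_left (ψ : Fin m → Fin k → ℂ) (A A' : Matrix (Fin m) (Fin m) ℂ)
    (B : Matrix (Fin k) (Fin k) ℂ) :
    corr ψ (A - A') B = corr ψ A B - corr ψ A' B := by
  simp [corr, Matrix.sub_apply, sub_mul, mul_sub, Finset.sum_sub_distrib]

lemma corr_add_right (ψ : Fin m → Fin k → ℂ) (A : Matrix (Fin m) (Fin m) ℂ)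
    (B B' : Matrix (Fin k) (Fin k) ℂ) :
    corr ψ A (B + B') = corr ψ A B + corr ψ A B' := by
  simp [corr, Matrix.add_apply, add_mul, mul_add, Finset.sum_add_distrib]

lemma corr_sub_right (ψ : Fin m → Fin k → ℂ) (A : Matrix (Fin m) (Fin m) ℂ)
    (B B' : Matrix (Fin k) (Fin k) ℂ) :
    corr ψ A (B - B') = corr ψ A B - corr ψ A B' := by
  simp [corr, Matrix.sub_apply, sub_mul, mul_sub, Finset.sum_sub_distrib]

lemma corr_one_one (ψ : Fin m → Fin k → ℂ)
    (hψ : ∑ a, ∑ b, Complex.normSq (ψ a b) = 1) :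
    corr ψ 1 1 = 1 := by
  have : corr ψ 1 1 = ∑ a, ∑ b, ((starRingEnd ℂ) (ψ a b) * ψ a b) := by
    simp [corr, Matrix.one_apply, Finset.sum_ite_eq', mul_ite, ite_mul]
  rw [this]
  have : ∀ z : ℂ, (starRingEnd ℂ) z * z = (Complex.normSq z : ℂ) := by
    intro z; rw [mul_comm, Complex.mul_conj]
  simp only [this]
  push_cast [← Complex.ofReal_sum]
  exact_mod_cast congrArg (Complex.ofReal) hψ

end CHSHAux

namespace CHSHAux
open TC

lemma sum_pi_two {τ : Fin 2 → Type*} [∀ i, Fintype (τ i)] {M : Type*} [AddCommMonoid M]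
    (f : (∀ i, τ i) → M) :
    ∑ x, f x = ∑ a, ∑ b, f ((piFinTwoEquiv τ).symm (a, b)) := by
  rw [← Equiv.sum_comp (piFinTwoEquiv τ).symm f, Fintype.sum_prod_type]

/-- Flattened state of a two-party strategy. -/
noncomputable def flat (S : QStrategy (fun _ : Fin 2 => Bool) (fun _ : Fin 2 => Bool)) :
    Fin (S.dim 0) → Fin (S.dim 1) → ℂ :=
  fun a b => S.state ((piFinTwoEquiv (fun i => Fin (S.dim i))).symm (a, b))

lemma flat_norm (S : QStrategy (fun _ : Fin 2 => Bool) (fun _ : Fin 2 => Bool)) :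
    ∑ a, ∑ b, Complex.normSq (flat S a b) = 1 := by
  rw [← S.state_norm, sum_pi_two (fun x => Complex.normSq (S.state x))]; rfl

lemma behavior_eq (S : QStrategy (fun _ : Fin 2 => Bool) (fun _ : Fin 2 => Bool))
    (o d : Fin 2 → Bool) :
    S.behavior o d = (corr (flat S) (S.proj 0 (o 0) (d 0)) (S.proj 1 (o 1) (d 1))).re := by
  unfold QStrategy.behavior projBehavior corr
  congr 1
  rw [sum_pi_two (τ := fun i => Fin (S.dim i))]
  refine Finset.sum_congr rfl fun a _ => ?_
  refine Finset.sum_congr rfl fun b _ => ?_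
  rw [sum_pi_two (τ := fun i => Fin (S.dim i))]
  refine Finset.sum_congr rfl fun c _ => ?_
  refine Finset.sum_congr rfl fun e _ => ?_
  simp [Fin.prod_univ_two, flat, mul_assoc]

end CHSHAux

namespace CHSHAux
open TC

variable {m k : ℕ}

lemma corr_pair_diag_re (ψ : Fin m → Fin k → ℂ)
    {P0 P1 : Matrix (Fin m) (Fin m) ℂ} {Q0 Q1 : Matrix (Fin k) (Fin k) ℂ}
    (hP : P0 + P1 = 1) (hQ : Q0 + Q1 = 1)
    (hψ : ∑ a, ∑ b, Complex.normSq (ψ a b) = 1) :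
    (corr ψ P0 Q0).re + (corr ψ P1 Q1).re
      = (1 + (corr ψ (P0 - P1) (Q0 - Q1)).re) / 2 := by
  have e1 : corr ψ (P0 + P1) (Q0 + Q1) = 1 := by rw [hP, hQ, corr_one_one ψ hψ]
  rw [corr_add_left, corr_add_right, corr_add_right] at e1
  have h1 : corr ψ P0 Q0 + corr ψ P1 Q1 + (corr ψ P0 Q0 + corr ψ P1 Q1)
      = 1 + corr ψ (P0 - P1) (Q0 - Q1) := by
    rw [corr_sub_left, corr_sub_right, corr_sub_right]
    linear_combination e1
  have h2 := congrArg Complex.re h1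
  simp only [Complex.add_re, Complex.one_re, Complex.sub_re] at h2
  linarith

lemma corr_pair_off_re (ψ : Fin m → Fin k → ℂ)
    {P0 P1 : Matrix (Fin m) (Fin m) ℂ} {Q0 Q1 : Matrix (Fin k) (Fin k) ℂ}
    (hP : P0 + P1 = 1) (hQ : Q0 + Q1 = 1)
    (hψ : ∑ a, ∑ b, Complex.normSq (ψ a b) = 1) :
    (corr ψ P0 Q1).re + (corr ψ P1 Q0).re
      = (1 - (corr ψ (P0 - P1) (Q0 - Q1)).re) / 2 := by
  have e1 : corr ψ (P0 + P1) (Q0 + Q1) = 1 := by rw [hP, hQ, corr_one_one ψ hψ]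
  rw [corr_add_left, corr_add_right, corr_add_right] at e1
  have h1 : corr ψ P0 Q1 + corr ψ P1 Q0 + (corr ψ P0 Q1 + corr ψ P1 Q0)
      = 1 - corr ψ (P0 - P1) (Q0 - Q1) := by
    rw [corr_sub_left, corr_sub_right, corr_sub_right]
    linear_combination e1
  have h2 := congrArg Complex.re h1
  simp only [Complex.add_re, Complex.one_re, Complex.sub_re] at h2
  linarith

/-- Party-1 observable. -/
noncomputable def obsA (S : QStrategy (fun _ : Fin 2 => Bool) (fun _ : Fin 2 => Bool))
    (o : Bool) : Matrix (Fin (S.dim 0)) (Fin (S.dim 0)) ℂ :=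
  S.proj 0 o false - S.proj 0 o true

/-- Party-2 observable. -/
noncomputable def obsB (S : QStrategy (fun _ : Fin 2 => Bool) (fun _ : Fin 2 => Bool))
    (o : Bool) : Matrix (Fin (S.dim 1)) (Fin (S.dim 1)) ℂ :=
  S.proj 1 o false - S.proj 1 o true

/-- Correlation of a two-party strategy. -/
noncomputable def cc (S : QStrategy (fun _ : Fin 2 => Bool) (fun _ : Fin 2 => Bool))
    (o o' : Bool) : ℝ :=
  (corr (flat S) (obsA S o) (obsB S o')).re

lemma projA_sum (S : QStrategy (fun _ : Fin 2 => Bool) (fun _ : Fin 2 => Bool)) (o : Bool) :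
    S.proj 0 o false + S.proj 0 o true = 1 := by
  have := S.proj_sum 0 o
  rwa [Fintype.sum_bool, add_comm] at this

lemma projB_sum (S : QStrategy (fun _ : Fin 2 => Bool) (fun _ : Fin 2 => Bool)) (o : Bool) :
    S.proj 1 o false + S.proj 1 o true = 1 := by
  have := S.proj_sum 1 o
  rwa [Fintype.sum_bool, add_comm] at this

lemma expUtility_formula (p : ℝ) (S : QStrategy (fun _ : Fin 2 => Bool) (fun _ : Fin 2 => Bool)) :
    expUtility (wCHSHp p) S.behavior
      = 1/2 + ((1-p)^2 * cc S false false + p*(1-p) * cc S false true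
          + p*(1-p) * cc S true false - p^2 * cc S true true) / 2 := by
  have hdiag := fun o0 o1 =>
    corr_pair_diag_re (flat S) (projA_sum S o0) (projB_sum S o1) (flat_norm S)
  have hoff := fun o0 o1 =>
    corr_pair_off_re (flat S) (projA_sum S o0) (projB_sum S o1) (flat_norm S)
  unfold expUtility
  simp only [sum_pi_two (τ := fun _ : Fin 2 => Bool), Fintype.sum_bool, behavior_eq]
  simp only [cc, obsA, obsB]
  simp [wCHSHp]
  linear_combination ((1-p)^2) * hdiag false false + (p*(1-p)) * hdiag false true
    + (p*(1-p)) * hdiag true false + (p^2) * hoff true true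

end CHSHAux

namespace CHSHAux
open TC

variable {m k : ℕ}

lemma sum_swap13 {ι1 ι2 ι3 M : Type*} [Fintype ι1] [Fintype ι2] [Fintype ι3]
    [AddCommMonoid M] (f : ι1 → ι2 → ι3 → M) :
    ∑ c, ∑ b, ∑ a, f a b c = ∑ a, ∑ b, ∑ c, f a b c := by
  calc ∑ c, ∑ b, ∑ a, f a b c
      = ∑ b, ∑ c, ∑ a, f a b c := Finset.sum_comm
    _ = ∑ b, ∑ a, ∑ c, f a b c := Finset.sum_congr rfl fun _ _ => Finset.sum_comm
    _ = ∑ a, ∑ b, ∑ c, f a b c := Finset.sum_comm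

/-- `(A† ⊗ 1)ψ` as a vector. -/
noncomputable def uVec (ψ : Fin m → Fin k → ℂ) (A : Matrix (Fin m) (Fin m) ℂ) :
    EuclideanSpace ℂ (Fin m × Fin k) :=
  WithLp.toLp 2 fun q => ∑ a, (starRingEnd ℂ) (A a q.1) * ψ a q.2

/-- `(1 ⊗ B)ψ` as a vector. -/
noncomputable def vVec (ψ : Fin m → Fin k → ℂ) (B : Matrix (Fin k) (Fin k) ℂ) :
    EuclideanSpace ℂ (Fin m × Fin k) :=
  WithLp.toLp 2 fun q => ∑ d, B q.2 d * ψ q.1 d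

lemma inner_uv (ψ : Fin m → Fin k → ℂ) (A : Matrix (Fin m) (Fin m) ℂ)
    (B : Matrix (Fin k) (Fin k) ℂ) :
    (inner ℂ (uVec ψ A) (vVec ψ B) : ℂ) = corr ψ A B := by
  have h : (inner ℂ (uVec ψ A) (vVec ψ B) : ℂ)
      = ∑ c, ∑ b, ∑ a, ∑ d, ((starRingEnd ℂ) (ψ a b) * A a c * B b d * ψ c d) := by
    simp only [PiLp.inner_apply, RCLike.inner_apply', Fintype.sum_prod_type, uVec, vVec, PiLp.toLp_apply]
    refine Finset.sum_congr rfl fun c _ => Finset.sum_congr rfl fun b _ => ?_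
    rw [map_sum, Finset.sum_mul_sum]
    refine Finset.sum_congr rfl fun a _ => Finset.sum_congr rfl fun d _ => ?_
    simp only [map_mul, Complex.conj_conj]
    ring
  rw [h, sum_swap13]
  rfl

lemma inner_uu (ψ : Fin m → Fin k → ℂ) (A A' : Matrix (Fin m) (Fin m) ℂ) :
    (inner ℂ (uVec ψ A) (uVec ψ A') : ℂ) = corr ψ (A * A'.conjTranspose) 1 := by
  have h : (inner ℂ (uVec ψ A) (uVec ψ A') : ℂ)
      = ∑ c, ∑ b, ∑ a, ∑ a', ((starRingEnd ℂ) (ψ a b) * (A a c * (starRingEnd ℂ) (A' a' c)) * ψ a' b) := by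
    simp only [PiLp.inner_apply, RCLike.inner_apply', Fintype.sum_prod_type, uVec, PiLp.toLp_apply]
    refine Finset.sum_congr rfl fun c _ => Finset.sum_congr rfl fun b _ => ?_
    rw [map_sum, Finset.sum_mul_sum]
    refine Finset.sum_congr rfl fun a _ => Finset.sum_congr rfl fun a' _ => ?_
    simp only [map_mul, Complex.conj_conj]
    ring
  have h2 : corr ψ (A * A'.conjTranspose) 1
      = ∑ a, ∑ b, ∑ a', ∑ c, ((starRingEnd ℂ) (ψ a b) * (A a c * (starRingEnd ℂ) (A' a' c)) * ψ a' b) := by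
    unfold corr
    simp only [Matrix.one_apply, mul_ite, mul_one, mul_zero, ite_mul, zero_mul,
      Finset.sum_ite_irrel, Finset.sum_const_zero, Finset.sum_ite_eq, Finset.sum_ite_eq',
      Finset.mem_univ, if_true, Matrix.mul_apply,
      Matrix.conjTranspose_apply, Finset.sum_mul, Finset.mul_sum]
    refine Finset.sum_congr rfl fun a _ => Finset.sum_congr rfl fun b _ =>
      Finset.sum_congr rfl fun a' _ => Finset.sum_congr rfl fun c _ => by
        simp only [starRingEnd_apply]; try ring
  rw [h, h2]
  calc ∑ c, ∑ b, ∑ a, ∑ a', ((starRingEnd ℂ) (ψ a b) * (A a c * (starRingEnd ℂ) (A' a' c)) * ψ a' b)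
      = ∑ a, ∑ b, ∑ c, ∑ a', ((starRingEnd ℂ) (ψ a b) * (A a c * (starRingEnd ℂ) (A' a' c)) * ψ a' b) :=
        sum_swap13 _
    _ = ∑ a, ∑ b, ∑ a', ∑ c, ((starRingEnd ℂ) (ψ a b) * (A a c * (starRingEnd ℂ) (A' a' c)) * ψ a' b) :=
        Finset.sum_congr rfl fun _ _ => Finset.sum_congr rfl fun _ _ => Finset.sum_comm

lemma inner_vv (ψ : Fin m → Fin k → ℂ) (B B' : Matrix (Fin k) (Fin k) ℂ) :
    (inner ℂ (vVec ψ B) (vVec ψ B') : ℂ) = corr ψ 1 (B.conjTranspose * B') := by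
  have h : (inner ℂ (vVec ψ B) (vVec ψ B') : ℂ)
      = ∑ a, ∑ e, ∑ b, ∑ d, ((starRingEnd ℂ) (ψ a b) * ((starRingEnd ℂ) (B e b) * B' e d) * ψ a d) := by
    simp only [PiLp.inner_apply, RCLike.inner_apply', Fintype.sum_prod_type, vVec, PiLp.toLp_apply]
    refine Finset.sum_congr rfl fun a _ => Finset.sum_congr rfl fun e _ => ?_
    rw [map_sum, Finset.sum_mul_sum]
    refine Finset.sum_congr rfl fun b _ => Finset.sum_congr rfl fun d _ => ?_
    simp only [map_mul, Complex.conj_conj]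
    ring
  have h2 : corr ψ 1 (B.conjTranspose * B')
      = ∑ a, ∑ b, ∑ d, ∑ e, ((starRingEnd ℂ) (ψ a b) * ((starRingEnd ℂ) (B e b) * B' e d) * ψ a d) := by
    unfold corr
    simp only [Matrix.one_apply, mul_ite, mul_one, mul_zero, ite_mul, zero_mul,
      Finset.sum_ite_irrel, Finset.sum_const_zero, Finset.sum_ite_eq, Finset.sum_ite_eq',
      Finset.mem_univ, if_true, Matrix.mul_apply,
      Matrix.conjTranspose_apply, Finset.sum_mul, Finset.mul_sum]
    refine Finset.sum_congr rfl fun a _ => Finset.sum_congr rfl fun b _ =>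
      Finset.sum_congr rfl fun d _ => Finset.sum_congr rfl fun e _ => by
        simp only [starRingEnd_apply]; try ring
  rw [h, h2]
  refine Finset.sum_congr rfl fun a _ => ?_
  calc ∑ e, ∑ b, ∑ d, ((starRingEnd ℂ) (ψ a b) * ((starRingEnd ℂ) (B e b) * B' e d) * ψ a d)
      = ∑ b, ∑ e, ∑ d, ((starRingEnd ℂ) (ψ a b) * ((starRingEnd ℂ) (B e b) * B' e d) * ψ a d) :=
        Finset.sum_comm
    _ = ∑ b, ∑ d, ∑ e, ((starRingEnd ℂ) (ψ a b) * ((starRingEnd ℂ) (B e b) * B' e d) * ψ a d) :=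
        Finset.sum_congr rfl fun _ _ => Finset.sum_comm

end CHSHAux

namespace CHSHAux
open TC

attribute [local instance] InnerProductSpace.complexToReal

variable {m k : ℕ}

lemma obsA_herm (S : QStrategy (fun _ : Fin 2 => Bool) (fun _ : Fin 2 => Bool)) (o : Bool) :
    (obsA S o).conjTranspose = obsA S o := by
  have h0 := S.proj_herm 0 o false
  have h1 := S.proj_herm 0 o true
  simp only [obsA, Matrix.conjTranspose_sub]
  rw [h0, h1]

lemma obsB_herm (S : QStrategy (fun _ : Fin 2 => Bool) (fun _ : Fin 2 => Bool)) (o : Bool) :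
    (obsB S o).conjTranspose = obsB S o := by
  have h0 := S.proj_herm 1 o false
  have h1 := S.proj_herm 1 o true
  simp only [obsB, Matrix.conjTranspose_sub]
  rw [h0, h1]

lemma obsA_sq (S : QStrategy (fun _ : Fin 2 => Bool) (fun _ : Fin 2 => Bool)) (o : Bool) :
    obsA S o * obsA S o = 1 := by
  have h01 := S.proj_orth 0 o false true (by decide)
  have h10 := S.proj_orth 0 o true false (by decide)
  have hi0 := S.proj_idem 0 o false
  have hi1 := S.proj_idem 0 o true
  have expand : obsA S o * obsA S o
      = S.proj 0 o false * S.proj 0 o false - S.proj 0 o false * S.proj 0 o true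
        - S.proj 0 o true * S.proj 0 o false + S.proj 0 o true * S.proj 0 o true := by
    simp only [obsA]; noncomm_ring
  rw [expand, hi0, hi1, h01, h10]
  simpa using projA_sum S o

lemma obsB_sq (S : QStrategy (fun _ : Fin 2 => Bool) (fun _ : Fin 2 => Bool)) (o : Bool) :
    obsB S o * obsB S o = 1 := by
  have h01 := S.proj_orth 1 o false true (by decide)
  have h10 := S.proj_orth 1 o true false (by decide)
  have hi0 := S.proj_idem 1 o false
  have hi1 := S.proj_idem 1 o true
  have expand : obsB S o * obsB S o
      = S.proj 1 o false * S.proj 1 o false - S.proj 1 o false * S.proj 1 o true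
        - S.proj 1 o true * S.proj 1 o false + S.proj 1 o true * S.proj 1 o true := by
    simp only [obsB]; noncomm_ring
  rw [expand, hi0, hi1, h01, h10]
  simpa using projB_sum S o

/-- The Alice vectors of a strategy. -/
noncomputable def uu (S : QStrategy (fun _ : Fin 2 => Bool) (fun _ : Fin 2 => Bool)) (o : Bool) :
    EuclideanSpace ℂ (Fin (S.dim 0) × Fin (S.dim 1)) :=
  uVec (flat S) (obsA S o)

/-- The Bob vectors of a strategy. -/
noncomputable def vv (S : QStrategy (fun _ : Fin 2 => Bool) (fun _ : Fin 2 => Bool)) (o : Bool) :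
    EuclideanSpace ℂ (Fin (S.dim 0) × Fin (S.dim 1)) :=
  vVec (flat S) (obsB S o)

lemma cc_eq_inner (S : QStrategy (fun _ : Fin 2 => Bool) (fun _ : Fin 2 => Bool)) (o o' : Bool) :
    cc S o o' = (inner ℝ (uu S o) (vv S o') : ℝ) := by
  rw [real_inner_eq_re_inner ℂ, uu, vv, inner_uv]
  rfl

lemma norm_uu (S : QStrategy (fun _ : Fin 2 => Bool) (fun _ : Fin 2 => Bool)) (o : Bool) :
    ‖uu S o‖ = 1 := by
  have h : (inner ℂ (uu S o) (uu S o) : ℂ) = 1 := by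
    rw [uu, inner_uu, obsA_herm, obsA_sq, corr_one_one _ (flat_norm S)]
  have h2 : ‖uu S o‖ ^ 2 = 1 := by
    rw [@norm_sq_eq_re_inner ℂ, h]; simp
  nlinarith [norm_nonneg (uu S o)]

lemma norm_vv (S : QStrategy (fun _ : Fin 2 => Bool) (fun _ : Fin 2 => Bool)) (o : Bool) :
    ‖vv S o‖ = 1 := by
  have h : (inner ℂ (vv S o) (vv S o) : ℂ) = 1 := by
    rw [vv, inner_vv, obsB_herm, obsB_sq, corr_one_one _ (flat_norm S)]
  have h2 : ‖vv S o‖ ^ 2 = 1 := by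
    rw [@norm_sq_eq_re_inner ℂ, h]; simp
  nlinarith [norm_nonneg (vv S o)]

end CHSHAux

namespace CHSHAux
open TC

lemma grouped_bound {F : Type*} [NormedAddCommGroup F] [InnerProductSpace ℝ F]
    (u0 u1 v0 v1 : F) (hu0 : ‖u0‖ = 1) (hu1 : ‖u1‖ = 1) (hv0 : ‖v0‖ = 1) (hv1 : ‖v1‖ = 1)
    (α β γ : ℝ) :
    ∃ X Y t : ℝ, 0 ≤ X ∧ 0 ≤ Y ∧ X^2 = α^2 + β^2 + 2*α*β*t ∧ Y^2 = β^2 + γ^2 - 2*β*γ*t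
      ∧ |t| ≤ 1 ∧
      α * (inner ℝ u0 v0 : ℝ) + β * (inner ℝ u0 v1 : ℝ) + β * (inner ℝ u1 v0 : ℝ)
          - γ * (inner ℝ u1 v1 : ℝ) ≤ X + Y := by
  refine ⟨‖α • v0 + β • v1‖, ‖β • v0 - γ • v1‖, (inner ℝ v0 v1 : ℝ),
    norm_nonneg _, norm_nonneg _, ?_, ?_, ?_, ?_⟩
  · rw [norm_add_sq_real, norm_smul, norm_smul, real_inner_smul_left, real_inner_smul_right,
      hv0, hv1]
    simp [mul_pow, sq_abs]
    ring
  · rw [norm_sub_sq_real, norm_smul, norm_smul, real_inner_smul_left, real_inner_smul_right,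
      hv0, hv1]
    simp [mul_pow, sq_abs]
    ring
  · have := abs_real_inner_le_norm v0 v1
    rwa [hv0, hv1, mul_one] at this
  · have h1 : α * (inner ℝ u0 v0 : ℝ) + β * (inner ℝ u0 v1 : ℝ)
        = (inner ℝ u0 (α • v0 + β • v1) : ℝ) := by
      rw [inner_add_right, real_inner_smul_right, real_inner_smul_right]
    have h2 : β * (inner ℝ u1 v0 : ℝ) - γ * (inner ℝ u1 v1 : ℝ)
        = (inner ℝ u1 (β • v0 - γ • v1) : ℝ) := by
      rw [inner_sub_right, real_inner_smul_right, real_inner_smul_right]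
    have b1 : (inner ℝ u0 (α • v0 + β • v1) : ℝ) ≤ ‖α • v0 + β • v1‖ := by
      have := real_inner_le_norm u0 (α • v0 + β • v1)
      rwa [hu0, one_mul] at this
    have b2 : (inner ℝ u1 (β • v0 - γ • v1) : ℝ) ≤ ‖β • v0 - γ • v1‖ := by
      have := real_inner_le_norm u1 (β • v0 - γ • v1)
      rwa [hu1, one_mul] at this
    linarith

lemma sqrt2_facts : (Real.sqrt 2)^2 = 2 ∧ 1 < Real.sqrt 2 ∧ Real.sqrt 2 < 2 := by
  have h : (Real.sqrt 2)^2 = 2 := Real.sq_sqrt (by norm_num)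
  have hpos : 0 < Real.sqrt 2 := Real.sqrt_pos.mpr (by norm_num)
  refine ⟨h, by nlinarith, by nlinarith⟩

lemma regionMid (p X Y t : ℝ) (hp1 : 1 - 1/Real.sqrt 2 ≤ p) (hp2 : p ≤ 1/Real.sqrt 2)
    (hX0 : 0 ≤ X) (hY0 : 0 ≤ Y)
    (hX2 : X^2 = ((1-p)^2)^2 + (p*(1-p))^2 + 2*((1-p)^2)*(p*(1-p))*t)
    (hY2 : Y^2 = (p*(1-p))^2 + (p^2)^2 - 2*(p*(1-p))*(p^2)*t) :
    X + Y ≤ Real.sqrt 2 * ((1-p)^2 + p^2) := by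
  obtain ⟨hr, hr1, hr2⟩ := sqrt2_facts
  set r := Real.sqrt 2 with hrdef
  have hrpos : (0:ℝ) < r := by linarith
  have hinv : 1/r < 1 := by rw [div_lt_one hrpos]; exact hr1
  have hp0 : 0 < p := by linarith
  have hp1' : p < 1 := by linarith
  have hα : 0 < (1-p)^2 := pow_pos (by linarith) 2
  have hγ : 0 < p^2 := pow_pos hp0 2
  have e1 : 0 ≤ p^2 * (X - r*(1-p)^2)^2 + (1-p)^2 * (Y - r*p^2)^2 := by positivity
  have e2 : p^2 * (X - r*(1-p)^2)^2 + (1-p)^2 * (Y - r*p^2)^2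
      = (p^2*X^2 + (1-p)^2*Y^2 + 2*((1-p)^2)^2*p^2 + 2*(1-p)^2*(p^2)^2)
        - 2*r*((1-p)^2*p^2)*(X+Y) := by
    linear_combination (((1-p)^2)^2*p^2 + (1-p)^2*(p^2)^2) * hr
  have e3 : p^2*X^2 + (1-p)^2*Y^2 + 2*((1-p)^2)^2*p^2 + 2*(1-p)^2*(p^2)^2
      = 4*((1-p)^2*p^2)*((1-p)^2+p^2) := by
    rw [hX2, hY2]; ring
  have e4 : 4*((1-p)^2*p^2)*((1-p)^2+p^2) = 2*r*((1-p)^2*p^2)*(r*((1-p)^2+p^2)) := by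
    linear_combination (-2*((1-p)^2*p^2)*((1-p)^2+p^2)) * hr
  rw [e2, e3, e4] at e1
  have hq : (0:ℝ) < r*((1-p)^2*p^2) := by
    have h1 := mul_pos hα hγ
    nlinarith [mul_pos hrpos h1]
  have e5 : (0:ℝ) ≤ 2*(r*((1-p)^2*p^2))*(r*((1-p)^2+p^2) - (X+Y)) := by linarith [e1]
  generalize hG : r*((1-p)^2*p^2) = W at e5 hq
  have h4 := (mul_nonneg_iff_of_pos_left (by linarith : (0:ℝ) < 2*W)).mp e5
  linarith

lemma regionLow (p X Y t : ℝ) (hp0 : 0 ≤ p) (hp : p ≤ 1 - 1/Real.sqrt 2)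
    (hX0 : 0 ≤ X) (hY0 : 0 ≤ Y)
    (hX2 : X^2 = ((1-p)^2)^2 + (p*(1-p))^2 + 2*((1-p)^2)*(p*(1-p))*t)
    (hY2 : Y^2 = (p*(1-p))^2 + (p^2)^2 - 2*(p*(1-p))*(p^2)*t)
    (ht : |t| ≤ 1) :
    X + Y ≤ 1 - 2*p^2 := by
  obtain ⟨hr, hr1, hr2⟩ := sqrt2_facts
  set r := Real.sqrt 2 with hrdef
  have hrpos : (0:ℝ) < r := by linarith
  obtain ⟨ht1, ht2⟩ := abs_le.mp ht
  have hrinv : 1/2 < 1/r := by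
    rw [div_lt_div_iff₀ (by norm_num) hrpos]; linarith
  have hphalf : p < 1/2 := by linarith
  have hcond : 0 ≤ 1 - 4*p + 2*p^2 := by
    have h1p : 1/r ≤ 1 - p := by linarith
    have h2 : (1/r)^2 ≤ (1-p)^2 := by
      apply pow_le_pow_left₀ (by positivity) h1p
    have h12 : (1/r)^2 = 1/2 := by
      rw [div_pow, hr]; norm_num
    nlinarith
  rcases eq_or_lt_of_le hp0 with hp0' | hp0'
  · have hp' : p = 0 := hp0'.symm
    subst hp'
    have hX2' : X^2 = 1 := by rw [hX2]; ring
    have hY : Y = 0 := by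
      have : Y^2 = 0 := by rw [hY2]; ring
      exact pow_eq_zero_iff two_ne_zero |>.mp this
    nlinarith [sq_nonneg (X-1)]
  · have hw0 : (0:ℝ) < (1-p)^2 + p*(1-p) := by nlinarith
    have hw1 : (0:ℝ) < p*(1-p) - p^2 := by nlinarith
    have e1 : 0 ≤ (p*(1-p) - p^2)*(X - ((1-p)^2 + p*(1-p)))^2
        + ((1-p)^2 + p*(1-p))*(Y - (p*(1-p) - p^2))^2
        + (1-t)*(2*(p*(1-p))^2*(1 - 4*p + 2*p^2)) := by
      have n1 : 0 ≤ (p*(1-p) - p^2)*(X - ((1-p)^2 + p*(1-p)))^2 :=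
        mul_nonneg hw1.le (sq_nonneg _)
      have n2 : 0 ≤ ((1-p)^2 + p*(1-p))*(Y - (p*(1-p) - p^2))^2 :=
        mul_nonneg hw0.le (sq_nonneg _)
      have n3 : 0 ≤ (1-t)*(2*(p*(1-p))^2*(1 - 4*p + 2*p^2)) := by
        apply mul_nonneg (by linarith)
        apply mul_nonneg (by positivity) hcond
      linarith
    have e2 : (p*(1-p) - p^2)*(X - ((1-p)^2 + p*(1-p)))^2
        + ((1-p)^2 + p*(1-p))*(Y - (p*(1-p) - p^2))^2
        + (1-t)*(2*(p*(1-p))^2*(1 - 4*p + 2*p^2))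
        = 2*(((1-p)^2 + p*(1-p))*(p*(1-p) - p^2))*((1 - 2*p^2) - (X+Y)) := by
      linear_combination (p*(1-p) - p^2)*hX2 + ((1-p)^2 + p*(1-p))*hY2
    rw [e2] at e1
    have hc : (0:ℝ) < ((1-p)^2 + p*(1-p))*(p*(1-p) - p^2) := mul_pos hw0 hw1
    generalize hG : ((1-p)^2 + p*(1-p))*(p*(1-p) - p^2) = W at e1 hc
    have h4 := (mul_nonneg_iff_of_pos_left (by linarith : (0:ℝ) < 2*W)).mp e1
    linarith

lemma regionHigh (p X Y t : ℝ) (hp : 1/Real.sqrt 2 ≤ p) (hp1 : p ≤ 1)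
    (hX0 : 0 ≤ X) (hY0 : 0 ≤ Y)
    (hX2 : X^2 = ((1-p)^2)^2 + (p*(1-p))^2 + 2*((1-p)^2)*(p*(1-p))*t)
    (hY2 : Y^2 = (p*(1-p))^2 + (p^2)^2 - 2*(p*(1-p))*(p^2)*t)
    (ht : |t| ≤ 1) :
    X + Y ≤ 4*p - 2*p^2 - 1 := by
  obtain ⟨hr, hr1, hr2⟩ := sqrt2_facts
  set r := Real.sqrt 2 with hrdef
  have hrpos : (0:ℝ) < r := by linarith
  obtain ⟨ht1, ht2⟩ := abs_le.mp ht
  have hrinv : 1/2 < 1/r := by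
    rw [div_lt_div_iff₀ (by norm_num) hrpos]; linarith
  have hphalf : 1/2 < p := by linarith
  have hcond : 0 ≤ 2*p^2 - 1 := by
    have h2 : (1/r)^2 ≤ p^2 := by
      apply pow_le_pow_left₀ (by positivity) hp
    have h12 : (1/r)^2 = 1/2 := by
      rw [div_pow, hr]; norm_num
    nlinarith
  rcases eq_or_lt_of_le hp1 with hp1' | hp1'
  · subst hp1'
    have hX : X = 0 := by
      have : X^2 = 0 := by rw [hX2]; ring
      exact pow_eq_zero_iff two_ne_zero |>.mp this
    have hY2' : Y^2 = 1 := by rw [hY2]; ring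
    nlinarith [sq_nonneg (Y-1)]
  · have hw0 : (0:ℝ) < p*(1-p) - (1-p)^2 := by nlinarith
    have hw1 : (0:ℝ) < p*(1-p) + p^2 := by nlinarith
    have e1 : 0 ≤ (p*(1-p) + p^2)*(X - (p*(1-p) - (1-p)^2))^2
        + (p*(1-p) - (1-p)^2)*(Y - (p*(1-p) + p^2))^2
        + (1+t)*(2*(p*(1-p))^2*(2*p^2 - 1)) := by
      have n1 : 0 ≤ (p*(1-p) + p^2)*(X - (p*(1-p) - (1-p)^2))^2 :=
        mul_nonneg hw1.le (sq_nonneg _)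
      have n2 : 0 ≤ (p*(1-p) - (1-p)^2)*(Y - (p*(1-p) + p^2))^2 :=
        mul_nonneg hw0.le (sq_nonneg _)
      have n3 : 0 ≤ (1+t)*(2*(p*(1-p))^2*(2*p^2 - 1)) := by
        apply mul_nonneg (by linarith)
        apply mul_nonneg (by positivity) hcond
      linarith
    have e2 : (p*(1-p) + p^2)*(X - (p*(1-p) - (1-p)^2))^2
        + (p*(1-p) - (1-p)^2)*(Y - (p*(1-p) + p^2))^2
        + (1+t)*(2*(p*(1-p))^2*(2*p^2 - 1))
        = 2*((p*(1-p) - (1-p)^2)*(p*(1-p) + p^2))*((4*p - 2*p^2 - 1) - (X+Y)) := by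
      linear_combination (p*(1-p) + p^2)*hX2 + (p*(1-p) - (1-p)^2)*hY2
    rw [e2] at e1
    have hc : (0:ℝ) < (p*(1-p) - (1-p)^2)*(p*(1-p) + p^2) := mul_pos hw0 hw1
    generalize hG : (p*(1-p) - (1-p)^2)*(p*(1-p) + p^2) = W at e1 hc
    have h4 := (mul_nonneg_iff_of_pos_left (by linarith : (0:ℝ) < 2*W)).mp e1
    linarith

end CHSHAux

namespace CHSHAux
open TC

attribute [local instance] InnerProductSpace.complexToReal

lemma value_bound_core (p : ℝ) (S : QStrategy (fun _ : Fin 2 => Bool) (fun _ : Fin 2 => Bool)) :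
    ∃ X Y t : ℝ, 0 ≤ X ∧ 0 ≤ Y
      ∧ X^2 = ((1-p)^2)^2 + (p*(1-p))^2 + 2*((1-p)^2)*(p*(1-p))*t
      ∧ Y^2 = (p*(1-p))^2 + (p^2)^2 - 2*(p*(1-p))*(p^2)*t ∧ |t| ≤ 1
      ∧ expUtility (wCHSHp p) S.behavior ≤ 1/2 + (X + Y)/2 := by
  obtain ⟨X, Y, t, hX0, hY0, hX2, hY2, ht, hM⟩ :=
    grouped_bound (uu S false) (uu S true) (vv S false) (vv S true)
      (norm_uu S false) (norm_uu S true) (norm_vv S false) (norm_vv S true)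
      ((1-p)^2) (p*(1-p)) (p^2)
  refine ⟨X, Y, t, hX0, hY0, hX2, hY2, ht, ?_⟩
  rw [expUtility_formula p S, cc_eq_inner, cc_eq_inner, cc_eq_inner, cc_eq_inner]
  linarith

lemma value_le_low {p : ℝ} (hp0 : 0 ≤ p) (hp : p ≤ 1 - 1/Real.sqrt 2)
    (S : QStrategy (fun _ : Fin 2 => Bool) (fun _ : Fin 2 => Bool)) :
    expUtility (wCHSHp p) S.behavior ≤ 1 - p^2 := by
  obtain ⟨X, Y, t, hX0, hY0, hX2, hY2, ht, hM⟩ := value_bound_core p S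
  have := regionLow p X Y t hp0 hp hX0 hY0 hX2 hY2 ht
  linarith

lemma value_le_high {p : ℝ} (hp : 1/Real.sqrt 2 ≤ p) (hp1 : p ≤ 1)
    (S : QStrategy (fun _ : Fin 2 => Bool) (fun _ : Fin 2 => Bool)) :
    expUtility (wCHSHp p) S.behavior ≤ 2*p - p^2 := by
  obtain ⟨X, Y, t, hX0, hY0, hX2, hY2, ht, hM⟩ := value_bound_core p S
  have := regionHigh p X Y t hp hp1 hX0 hY0 hX2 hY2 ht
  linarith

lemma value_le_mid {p : ℝ} (hp1 : 1 - 1/Real.sqrt 2 ≤ p) (hp2 : p ≤ 1/Real.sqrt 2)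
    (S : QStrategy (fun _ : Fin 2 => Bool) (fun _ : Fin 2 => Bool)) :
    expUtility (wCHSHp p) S.behavior ≤ (1/Real.sqrt 2) * (1 - 2*p*(1-p)) + 1/2 := by
  obtain ⟨X, Y, t, hX0, hY0, hX2, hY2, ht, hM⟩ := value_bound_core p S
  have hb := regionMid p X Y t hp1 hp2 hX0 hY0 hX2 hY2
  obtain ⟨hr, hr1, hr2⟩ := sqrt2_facts
  have hrpos : (0:ℝ) < Real.sqrt 2 := by linarith
  have key : (1/Real.sqrt 2) * (1 - 2*p*(1-p)) = Real.sqrt 2 * ((1-p)^2 + p^2) / 2 := by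
    rw [one_div_mul_eq_div, div_eq_div_iff (ne_of_gt hrpos) (by norm_num : (2:ℝ) ≠ 0)]
    linear_combination (-((1-p)^2 + p^2)) * hr
  rw [key]
  linarith

end CHSHAux

namespace CHSHAux
open TC

/-- Deterministic quantum strategy given by response functions `f g`. -/
noncomputable def detQ (f g : Bool → Bool) :
    QStrategy (fun _ : Fin 2 => Bool) (fun _ : Fin 2 => Bool) where
  dim := fun _ => 1
  dim_pos := fun _ => one_pos
  proj := fun i o d => if d = ![f, g] i o then 1 else 0
  proj_herm := by
    intro i o d
    by_cases h : d = ![f, g] i o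
    · rw [if_pos h]; exact Matrix.isHermitian_one
    · rw [if_neg h]; exact Matrix.isHermitian_zero
  proj_idem := by
    intro i o d
    by_cases h : d = ![f, g] i o
    · simp [h]
    · simp [h]
  proj_orth := by
    intro i o d d' hne
    by_cases h1 : d = ![f, g] i o
    · have h2 : ¬ d' = ![f, g] i o := fun h => hne (h1.trans h.symm)
      rw [if_pos h1, if_neg h2, mul_zero]
    · rw [if_neg h1, zero_mul]
  proj_sum := by
    intro i o
    rw [Fintype.sum_bool]
    rcases h : ![f, g] i o with _ | _
    · rw [if_neg (by simp [h]), if_pos (by simp [h]), zero_add]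
    · rw [if_pos (by simp [h]), if_neg (by simp [h]), add_zero]
  state := fun _ => 1
  state_norm := by simp

noncomputable def flat1 (f g : Bool → Bool) : Fin 1 → Fin 1 → ℂ := flat (detQ f g)
noncomputable def obsA1 (f g : Bool → Bool) (o : Bool) : Matrix (Fin 1) (Fin 1) ℂ :=
  obsA (detQ f g) o
noncomputable def obsB1 (f g : Bool → Bool) (o : Bool) : Matrix (Fin 1) (Fin 1) ℂ :=
  obsB (detQ f g) o

lemma detQ_cc (f g : Bool → Bool) (o o' : Bool) :
    cc (detQ f g) o o' = (if f o then -1 else 1) * (if g o' then -1 else 1) := by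
  have hcc : cc (detQ f g) o o'
      = (corr (flat1 f g) (obsA1 f g o) (obsB1 f g o')).re := rfl
  rw [hcc]
  have hψ : flat1 f g 0 0 = 1 := rfl
  have hA : obsA1 f g o 0 0 = ((if f o then -1 else 1 : ℝ) : ℂ) := by
    rcases h : f o with _ | _ <;>
      simp [obsA1, obsA, detQ, h, Matrix.sub_apply] <;> erw [Matrix.sub_apply] <;> simp
  have hB : obsB1 f g o' 0 0 = ((if g o' then -1 else 1 : ℝ) : ℂ) := by
    rcases h : g o' with _ | _ <;>
      simp [obsB1, obsB, detQ, h, Matrix.sub_apply] <;> erw [Matrix.sub_apply] <;> simp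
  have hcorr : corr (flat1 f g) (obsA1 f g o) (obsB1 f g o')
      = obsA1 f g o 0 0 * obsB1 f g o' 0 0 := by
    rw [corr]
    rw [Fin.sum_univ_one, Fin.sum_univ_one, Fin.sum_univ_one, Fin.sum_univ_one, hψ]
    simp
  rw [hcorr, hA, hB, ← Complex.ofReal_mul, Complex.ofReal_re]

lemma detQ_low_value (p : ℝ) :
    expUtility (wCHSHp p) (detQ (fun _ => false) (fun _ => false)).behavior = 1 - p^2 := by
  rw [expUtility_formula]
  simp only [detQ_cc]
  norm_num
  ring

lemma detQ_high_value (p : ℝ) :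
    expUtility (wCHSHp p) (detQ (fun o => o) (fun o => !o)).behavior = 2*p - p^2 := by
  rw [expUtility_formula]
  simp only [detQ_cc]
  norm_num
  ring

end CHSHAux

namespace CHSHAux
open TC

/-- Qubit projector onto the ±1 eigenspace of `c·X + s·Z`. -/
noncomputable def Pm (c s : ℝ) (d : Bool) : Matrix (Fin 2) (Fin 2) ℂ :=
  if d then
    !![(((1 - s)/2 : ℝ) : ℂ), ((-c/2 : ℝ) : ℂ); ((-c/2 : ℝ) : ℂ), (((1 + s)/2 : ℝ) : ℂ)]
  else
    !![(((1 + s)/2 : ℝ) : ℂ), ((c/2 : ℝ) : ℂ); ((c/2 : ℝ) : ℂ), (((1 - s)/2 : ℝ) : ℂ)]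

/-- The observable `c·X + s·Z`. -/
noncomputable def Obs (c s : ℝ) : Matrix (Fin 2) (Fin 2) ℂ :=
  !![((s : ℝ) : ℂ), ((c : ℝ) : ℂ); ((c : ℝ) : ℂ), ((-s : ℝ) : ℂ)]

lemma Pm_herm (c s : ℝ) (d : Bool) : (Pm c s d).IsHermitian := by
  rcases d with _ | _ <;>
  · refine Matrix.IsHermitian.ext fun i j => ?_
    fin_cases i <;> fin_cases j <;> simp [Pm, Matrix.conjTranspose_apply]

lemma Pm_idem (c s : ℝ) (hcs : c^2 + s^2 = 1) (d : Bool) : Pm c s d * Pm c s d = Pm c s d := by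
  rcases d with _ | _ <;>
  · ext i j
    fin_cases i <;> fin_cases j <;>
    · simp [Pm, Matrix.mul_apply, Fin.sum_univ_two]
      try push_cast
      try ring_nf
      try linear_combination (1/4 : ℂ) * (by exact_mod_cast hcs : (c:ℂ)^2 + (s:ℂ)^2 = 1)

lemma Pm_orth (c s : ℝ) (hcs : c^2 + s^2 = 1) (d d' : Bool) (hne : d ≠ d') :
    Pm c s d * Pm c s d' = 0 := by
  rcases d with _ | _ <;> rcases d' with _ | _ <;> try exact absurd rfl hne
  all_goals
  · ext i j
    fin_cases i <;> fin_cases j <;>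
    · simp [Pm, Matrix.mul_apply, Fin.sum_univ_two]
      try push_cast
      try ring_nf
      try linear_combination (-1/4 : ℂ) * (by exact_mod_cast hcs : (c:ℂ)^2 + (s:ℂ)^2 = 1)

lemma Pm_sum (c s : ℝ) : Pm c s true + Pm c s false = 1 := by
  ext i j
  fin_cases i <;> fin_cases j <;>
  · simp [Pm, Matrix.add_apply, Matrix.one_apply]
    push_cast
    try ring

lemma Pm_obs (c s : ℝ) : Pm c s false - Pm c s true = Obs c s := by
  ext i j
  fin_cases i <;> fin_cases j <;>
  · simp [Pm, Obs, Matrix.sub_apply]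
    push_cast
    try ring

/-- Planar two-qubit strategy on the maximally entangled state. -/
noncomputable def midQ (ca sa cb sb : Bool → ℝ)
    (hA : ∀ o, (ca o)^2 + (sa o)^2 = 1) (hB : ∀ o, (cb o)^2 + (sb o)^2 = 1) :
    QStrategy (fun _ : Fin 2 => Bool) (fun _ : Fin 2 => Bool) where
  dim := fun _ => 2
  dim_pos := fun _ => two_pos
  proj := fun i o d => if i = 0 then Pm (ca o) (sa o) d else Pm (cb o) (sb o) d
  proj_herm := by
    intro i o d
    by_cases h : i = 0
    · simp only [if_pos h]
      apply Pm_herm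
    · simp only [if_neg h]
      apply Pm_herm
  proj_idem := by
    intro i o d
    by_cases h : i = 0
    · simp only [if_pos h]
      exact Pm_idem _ _ (hA o) d
    · simp only [if_neg h]
      exact Pm_idem _ _ (hB o) d
  proj_orth := by
    intro i o d d' hne
    by_cases h : i = 0
    · simp only [if_pos h]
      exact Pm_orth _ _ (hA o) d d' hne
    · simp only [if_neg h]
      exact Pm_orth _ _ (hB o) d d' hne
  proj_sum := by
    intro i o
    rw [Fintype.sum_bool]
    by_cases h : i = 0
    · simp only [if_pos h]
      exact Pm_sum _ _
    · simp only [if_neg h]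
      exact Pm_sum _ _
  state := fun x => if x 0 = x 1 then (((Real.sqrt 2)⁻¹ : ℝ) : ℂ) else 0
  state_norm := by
    rw [sum_pi_two (τ := fun _ : Fin 2 => Fin 2)]
    rw [Fin.sum_univ_two]
    conv_lhs => rw [Fin.sum_univ_two, Fin.sum_univ_two]
    have hr : ((Real.sqrt 2)⁻¹) * ((Real.sqrt 2)⁻¹) = 1/2 := by
      rw [← mul_inv, Real.mul_self_sqrt (by norm_num)]
      norm_num
    simp [Complex.normSq_ofReal]
    nlinarith [hr]

end CHSHAux

namespace CHSHAux
open TC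

noncomputable def flat2 (ca sa cb sb : Bool → ℝ)
    (hA : ∀ o, (ca o)^2 + (sa o)^2 = 1) (hB : ∀ o, (cb o)^2 + (sb o)^2 = 1) :
    Fin 2 → Fin 2 → ℂ := flat (midQ ca sa cb sb hA hB)

noncomputable def obsA2 (ca sa cb sb : Bool → ℝ)
    (hA : ∀ o, (ca o)^2 + (sa o)^2 = 1) (hB : ∀ o, (cb o)^2 + (sb o)^2 = 1) (o : Bool) :
    Matrix (Fin 2) (Fin 2) ℂ := obsA (midQ ca sa cb sb hA hB) o

noncomputable def obsB2 (ca sa cb sb : Bool → ℝ)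
    (hA : ∀ o, (ca o)^2 + (sa o)^2 = 1) (hB : ∀ o, (cb o)^2 + (sb o)^2 = 1) (o : Bool) :
    Matrix (Fin 2) (Fin 2) ℂ := obsB (midQ ca sa cb sb hA hB) o

lemma obsA2_eq (ca sa cb sb : Bool → ℝ) (hA) (hB) (o : Bool) :
    obsA2 ca sa cb sb hA hB o = Obs (ca o) (sa o) := by
  have h : obsA2 ca sa cb sb hA hB o
      = Pm (ca o) (sa o) false - Pm (ca o) (sa o) true := by
    simp [obsA2, obsA, midQ]
    rfl
  rw [h, Pm_obs]

lemma obsB2_eq (ca sa cb sb : Bool → ℝ) (hA) (hB) (o : Bool) :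
    obsB2 ca sa cb sb hA hB o = Obs (cb o) (sb o) := by
  have h : obsB2 ca sa cb sb hA hB o
      = Pm (cb o) (sb o) false - Pm (cb o) (sb o) true := by
    simp [obsB2, obsB, midQ]
    rfl
  rw [h, Pm_obs]

lemma flat2_apply (ca sa cb sb : Bool → ℝ) (hA) (hB) (a b : Fin 2) :
    flat2 ca sa cb sb hA hB a b = if a = b then (((Real.sqrt 2)⁻¹ : ℝ) : ℂ) else 0 := by
  simp [flat2, flat, midQ]
  rfl

lemma corr_obs (ψ : Fin 2 → Fin 2 → ℂ)
    (hψ : ∀ a b, ψ a b = if a = b then (((Real.sqrt 2)⁻¹ : ℝ) : ℂ) else 0)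
    (c1 s1 c2 s2 : ℝ) :
    (corr ψ (Obs c1 s1) (Obs c2 s2)).re = c1*c2 + s1*s2 := by
  have hrr : ((Real.sqrt 2)⁻¹ : ℝ) * ((Real.sqrt 2)⁻¹ : ℝ) = 1/2 := by
    rw [← mul_inv, Real.mul_self_sqrt (by norm_num)]
    norm_num
  have h : corr ψ (Obs c1 s1) (Obs c2 s2) = ((c1*c2 + s1*s2 : ℝ) : ℂ) := by
    rw [corr]
    simp only [Fin.sum_univ_two, hψ, Obs]
    norm_num [Matrix.cons_val_zero, Matrix.cons_val_one, Matrix.head_cons]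
    push_cast
    norm_cast
    linear_combination (2*(c1*c2 + s1*s2) : ℝ) * hrr
  rw [h, Complex.ofReal_re]

lemma midQ_cc (ca sa cb sb : Bool → ℝ) (hA) (hB) (o o' : Bool) :
    cc (midQ ca sa cb sb hA hB) o o' = ca o * cb o' + sa o * sb o' := by
  have hcc : cc (midQ ca sa cb sb hA hB) o o'
      = (corr (flat2 ca sa cb sb hA hB) (obsA2 ca sa cb sb hA hB o)
          (obsB2 ca sa cb sb hA hB o')).re := rfl
  rw [hcc, obsA2_eq, obsB2_eq]
  exact corr_obs _ (flat2_apply ca sa cb sb hA hB) _ _ _ _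

lemma mid_exists (p : ℝ) (hp1 : 1 - 1/Real.sqrt 2 ≤ p) (hp2 : p ≤ 1/Real.sqrt 2) :
    ∃ S : QStrategy (fun _ : Fin 2 => Bool) (fun _ : Fin 2 => Bool),
      expUtility (wCHSHp p) S.behavior = (1/Real.sqrt 2) * (1 - 2*p*(1-p)) + 1/2 := by
  obtain ⟨hr, hr1, hr2⟩ := sqrt2_facts
  have hrpos : (0:ℝ) < Real.sqrt 2 := by linarith
  have hrne : Real.sqrt 2 ≠ 0 := ne_of_gt hrpos
  have hinv : 1/Real.sqrt 2 < 1 := by rw [div_lt_one hrpos]; exact hr1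
  have hp0 : 0 < p := by linarith
  have hp1' : p < 1 := by linarith
  have hpne : p ≠ 0 := ne_of_gt hp0
  have h1pne : (1:ℝ) - p ≠ 0 := by intro h; nlinarith
  have h12 : (1/Real.sqrt 2)^2 = 1/2 := by
    rw [div_pow, hr]; norm_num
  have hg2 : p^2 ≤ 1/2 := by
    have := pow_le_pow_left₀ (by linarith : (0:ℝ) ≤ p) hp2 2
    linarith [this, h12]
  have ha2 : (1-p)^2 ≤ 1/2 := by
    have h1 : 1 - p ≤ 1/Real.sqrt 2 := by linarith
    have := pow_le_pow_left₀ (by linarith : (0:ℝ) ≤ 1-p) h1 2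
    linarith [this, h12]
  set t : ℝ := (1-2*p)/(2*p*(1-p)) with htdef
  have hdpos : 0 < 2*p*(1-p) := by nlinarith
  have hden : 2*p*(1-p) ≠ 0 := ne_of_gt hdpos
  have ht' : 2*p*(1-p)*t = 1-2*p := by
    rw [htdef]; field_simp
  have ht2 : t^2 ≤ 1 := by
    have hdsq : 0 < (2*p*(1-p))^2 := by positivity
    rw [htdef, div_pow, div_le_one hdsq]
    nlinarith [mul_nonneg (by linarith : (0:ℝ) ≤ 1 - 2*(1-p)^2)
      (by linarith : (0:ℝ) ≤ 1 - 2*p^2)]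
  have hs2 : (Real.sqrt (1 - t^2))^2 = 1 - t^2 := Real.sq_sqrt (by linarith)
  set s : ℝ := Real.sqrt (1 - t^2) with hsdef
  set cA0 : ℝ := ((1-p)^2 + p*(1-p)*t)/(Real.sqrt 2*(1-p)^2) with hca0
  set sA0 : ℝ := (p*(1-p)*s)/(Real.sqrt 2*(1-p)^2) with hsa0
  set cA1 : ℝ := (p*(1-p) - p^2*t)/(Real.sqrt 2*p^2) with hca1
  set sA1 : ℝ := -(p^2*s)/(Real.sqrt 2*p^2) with hsa1
  have N0 : ((1-p)^2 + p*(1-p)*t)^2 + (p*(1-p)*s)^2 = 2*((1-p)^2)^2 := by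
    linear_combination (p*(1-p))^2 * hs2 + ((1-p)^2) * ht'
  have N1 : (p*(1-p) - p^2*t)^2 + (p^2*s)^2 = 2*(p^2)^2 := by
    linear_combination (p^2)^2 * hs2 + (-(p^2)) * ht'
  have hane : Real.sqrt 2*(1-p)^2 ≠ 0 := by
    intro h
    rcases mul_eq_zero.mp h with h' | h'
    · exact hrne h'
    · exact h1pne (pow_eq_zero_iff two_ne_zero |>.mp h')
  have hgne : Real.sqrt 2*p^2 ≠ 0 := by
    intro h
    rcases mul_eq_zero.mp h with h' | h'
    · exact hrne h'
    · exact hpne (pow_eq_zero_iff two_ne_zero |>.mp h')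
  have hu0 : cA0^2 + sA0^2 = 1 := by
    rw [hca0, hsa0, div_pow, div_pow, ← add_div,
      div_eq_one_iff_eq (pow_ne_zero 2 hane)]
    linear_combination N0 + (-((1-p)^2)^2) * hr
  have hu1 : cA1^2 + sA1^2 = 1 := by
    rw [hca1, hsa1, neg_div, neg_sq, div_pow, div_pow, ← add_div,
      div_eq_one_iff_eq (pow_ne_zero 2 hgne)]
    linear_combination N1 + (-(p^2)^2) * hr
  have hAu : ∀ o : Bool, ((fun o => cond o cA1 cA0) o)^2 + ((fun o => cond o sA1 sA0) o)^2 = 1 := by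
    intro o; cases o
    · simpa using hu0
    · simpa using hu1
  have hBu : ∀ o : Bool, ((fun o => cond o t 1) o)^2 + ((fun o => cond o s 0) o)^2 = 1 := by
    intro o; cases o
    · norm_num
    · simpa using by linarith [hs2]
  refine ⟨midQ _ _ _ _ hAu hBu, ?_⟩
  rw [expUtility_formula]
  simp only [midQ_cc, Bool.cond_false, Bool.cond_true]
  have hE1 : (1-p)^2*(cA0*1 + sA0*0) + p*(1-p)*(cA0*t + sA0*s)
      = (((1-p)^2 + p*(1-p)*t)^2 + (p*(1-p)*s)^2)/(Real.sqrt 2*(1-p)^2) := by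
    rw [hca0, hsa0]; field_simp; ring
  have hE1' : (1-p)^2*(cA0*1 + sA0*0) + p*(1-p)*(cA0*t + sA0*s) = Real.sqrt 2*(1-p)^2 := by
    rw [hE1, N0, div_eq_iff hane]
    linear_combination (-((1-p)^2)^2) * hr
  have hE2 : p*(1-p)*(cA1*1 + sA1*0) - p^2*(cA1*t + sA1*s)
      = ((p*(1-p) - p^2*t)^2 + (p^2*s)^2)/(Real.sqrt 2*p^2) := by
    rw [hca1, hsa1]; field_simp; ring
  have hE2' : p*(1-p)*(cA1*1 + sA1*0) - p^2*(cA1*t + sA1*s) = Real.sqrt 2*p^2 := by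
    rw [hE2, N1, div_eq_iff hgne]
    linear_combination (-(p^2)^2) * hr
  have hkey : (1/Real.sqrt 2) * (1 - 2*p*(1-p))
      = (Real.sqrt 2*(1-p)^2 + Real.sqrt 2*p^2)/2 := by
    rw [one_div_mul_eq_div, div_eq_div_iff hrne (by norm_num : (2:ℝ) ≠ 0)]
    linear_combination (-((1-p)^2 + p^2)) * hr
  linarith [hE1', hE2', hkey]
end CHSHAux

namespace CHSHAux
open TC

lemma qValue_eq {w : (Fin 2 → Bool) → (Fin 2 → Bool) → ℝ} {v : ℝ}
    (S₀ : QStrategy (fun _ : Fin 2 => Bool) (fun _ : Fin 2 => Bool))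
    (h0 : expUtility w S₀.behavior = v)
    (hub : ∀ S : QStrategy (fun _ : Fin 2 => Bool) (fun _ : Fin 2 => Bool),
      expUtility w S.behavior ≤ v) :
    qValue (O := fun _ : Fin 2 => Bool) (D := fun _ : Fin 2 => Bool) w = v := by
  unfold qValue
  apply le_antisymm
  · exact csSup_le ⟨v, ⟨S₀, h0.symm⟩⟩ (by rintro x ⟨S, rfl⟩; exact hub S)
  · exact le_csSup ⟨v, by rintro x ⟨S, rfl⟩; exact hub S⟩ ⟨S₀, h0.symm⟩

end CHSHAux

open TC CHSHAux in
theorem qValue_wCHSHp' (p : ℝ) (hp0 : 0 ≤ p) (hp1 : p ≤ 1) :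
    (p ≤ 1 - 1 / Real.sqrt 2 →
      qValue (O := fun _ : Fin 2 => Bool) (D := fun _ : Fin 2 => Bool) (wCHSHp p)
        = 1 - p ^ 2) ∧
    (1 - 1 / Real.sqrt 2 ≤ p → p ≤ 1 / Real.sqrt 2 →
      qValue (O := fun _ : Fin 2 => Bool) (D := fun _ : Fin 2 => Bool) (wCHSHp p)
        = (1 / Real.sqrt 2) * (1 - 2 * p * (1 - p)) + 1/2) ∧
    (1 / Real.sqrt 2 ≤ p →
      qValue (O := fun _ : Fin 2 => Bool) (D := fun _ : Fin 2 => Bool) (wCHSHp p)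
        = 2 * p - p ^ 2) ∧
    qValue (O := fun _ : Fin 2 => Bool) (D := fun _ : Fin 2 => Bool) (wCHSHp (1/2))
        = Real.cos (Real.pi / 8) ^ 2 := by
  obtain ⟨hr, hr1, hr2⟩ := sqrt2_facts
  have hrpos : (0:ℝ) < Real.sqrt 2 := by linarith
  have hrne : Real.sqrt 2 ≠ 0 := ne_of_gt hrpos
  have e1 : 1 - 1/Real.sqrt 2 ≤ 1/2 := by
    have : 1/2 < 1/Real.sqrt 2 := by
      rw [div_lt_div_iff₀ (by norm_num) hrpos]; linarith
    linarith
  have e2 : (1:ℝ)/2 ≤ 1/Real.sqrt 2 := by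
    have : 1/2 < 1/Real.sqrt 2 := by
      rw [div_lt_div_iff₀ (by norm_num) hrpos]; linarith
    linarith
  refine ⟨?_, ?_, ?_, ?_⟩
  · intro hp
    have h0 : expUtility (wCHSHp p) (detQ (fun _ => false) (fun _ => false)).behavior
        = 1 - p^2 := detQ_low_value p
    exact qValue_eq _ h0 (fun S => value_le_low hp0 hp S)
  · intro h1 h2
    obtain ⟨S, hS⟩ := mid_exists p h1 h2
    exact qValue_eq S hS (fun S' => value_le_mid h1 h2 S')
  · intro hp
    have h0 : expUtility (wCHSHp p) (detQ (fun o => o) (fun o => !o)).behavior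
        = 2*p - p^2 := detQ_high_value p
    exact qValue_eq _ h0 (fun S => value_le_high hp hp1 S)
  · obtain ⟨S, hS⟩ := mid_exists (1/2) e1 e2
    have h := qValue_eq S hS (fun S' => value_le_mid e1 e2 S')
    rw [h, Real.cos_sq]
    have harg : (2:ℝ)*(Real.pi/8) = Real.pi/4 := by ring
    rw [harg, Real.cos_pi_div_four]
    have hrne' : Real.sqrt 2 ≠ 0 := hrne
    field_simp
    linear_combination (-1 : ℝ) * hr

open TC in
/-- the quantum value of the CHSH game with independent Bernoulli(p) inputs is
`1 − p²` for `0 ≤ p ≤ 1 − 1/√2`, `(1/√2)(1 − 2p(1−p)) + 1/2` for `1 − 1/√2 ≤ p ≤ 1/√2`, and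
`2p − p²` for `1/√2 ≤ p ≤ 1`; in particular for `p = 1/2` it equals `cos²(π/8)`. -/
theorem qValue_wCHSHp (p : ℝ) (hp0 : 0 ≤ p) (hp1 : p ≤ 1) :
    (p ≤ 1 - 1 / Real.sqrt 2 →
      qValue (O := fun _ : Fin 2 => Bool) (D := fun _ : Fin 2 => Bool) (wCHSHp p)
        = 1 - p ^ 2) ∧
    (1 - 1 / Real.sqrt 2 ≤ p → p ≤ 1 / Real.sqrt 2 →
      qValue (O := fun _ : Fin 2 => Bool) (D := fun _ : Fin 2 => Bool) (wCHSHp p)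
        = (1 / Real.sqrt 2) * (1 - 2 * p * (1 - p)) + 1/2) ∧
    (1 / Real.sqrt 2 ≤ p →
      qValue (O := fun _ : Fin 2 => Bool) (D := fun _ : Fin 2 => Bool) (wCHSHp p)
        = 2 * p - p ^ 2) ∧
    qValue (O := fun _ : Fin 2 => Bool) (D := fun _ : Fin 2 => Bool) (wCHSHp (1/2))
        = Real.cos (Real.pi / 8) ^ 2 := by
  exact qValue_wCHSHp' p hp0 hp1
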